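/- For any square matrix Q ∈ ℝ^{n×n} and μ > 0, the unique minimizer of (1/μ)‖W‖₊ + (1/2)‖W − Q‖_F² subject to W = Wᵀ is W* = U_r(Σ_r − (1/μ)I_r)V_rᵀ, where Q̃ = (Q + Qᵀ)/2 has SVD UΣVᵀ, Σ_r = diag(σ₁,…,σ_r) are the singular values of Q̃ with σᵢ > 1/μ, and U_r, V_r are the corresponding singular vectors. -/

import Mathlib

open Matrix BigOperators

/-- Nuclear norm: sum of singular values (square roots of eigenvalues of AᴴA). -/
noncomputable def nuclearNorm {m n : Type*} [Fintype m] [Fintype n] [DecidableEq n]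
    (A : Matrix m n ℝ) : ℝ :=
  ∑ i, Real.sqrt ((show (Aᵀ * A).IsHermitian by
    rw [← Matrix.conjTranspose_eq_transpose_of_trivial]
    exact Matrix.isHermitian_conjTranspose_mul_self A).eigenvalues i)

/-- Squared Frobenius norm. -/
def frobSq {m n : Type*} [Fintype m] [Fintype n] (A : Matrix m n ℝ) : ℝ :=
  ∑ i, ∑ j, (A i j) ^ 2

/-- Frobenius norm. -/
noncomputable def frobNorm {m n : Type*} [Fintype m] [Fintype n] (A : Matrix m n ℝ) : ℝ :=
  Real.sqrt (frobSq A)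

/-!
Write `S = (Q + Qᵀ)/2 = U Σ Vᵀ`. For symmetric `W` the Frobenius term splits as
`‖W - S‖² + ‖S - Q‖²`, symmetric and antisymmetric matrices being orthogonal, so only the
proximal problem at `S` matters.

`W*` is symmetric: with `M = VᵀU`, symmetry of `S` gives `MΣ = ΣMᵀ` and `MᵀΣ = ΣM`, which forces
`M f(Σ) = f(Σ) Mᵀ` for every `f` with `f 0 = 0`.

Optimality: `S - W* = μ⁻¹ Z` with `Z = U diag(z) Vᵀ`, `0 ≤ z ≤ 1` and `z = 1` wherever `W*` has a
nonzero singular value. Hence `⟨Z, W*⟩ = ‖W*‖₊`, while `⟨Z, W⟩ ≤ ‖W‖₊` for symmetric `W = P Λ Pᵀ`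
because the diagonal entries of `Pᵀ Z P` lie in `[-1, 1]`. So `Z` is a subgradient of the nuclear
norm at `W*`, and the strictly convex quadratic term makes `W*` the unique minimiser.
-/

section Frobenius

variable {m n : Type*} [Fintype m] [Fintype n]

lemma frobSq_eq_trace (A : Matrix m n ℝ) : frobSq A = (Aᵀ * A).trace := by
  simp only [frobSq, trace, diag, mul_apply, transpose_apply, sq]
  exact Finset.sum_comm

lemma frobSq_add (X Y : Matrix m n ℝ) :
    frobSq (X + Y) = frobSq X + 2 * (Xᵀ * Y).trace + frobSq Y := by
  have h : (Yᵀ * X).trace = (Xᵀ * Y).trace := by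
    rw [← trace_transpose, transpose_mul, transpose_transpose]
  simp only [frobSq_eq_trace, transpose_add, Matrix.add_mul, Matrix.mul_add, trace_add, h]
  ring

lemma frobSq_pos {A : Matrix m n ℝ} (hA : A ≠ 0) : 0 < frobSq A := by
  obtain ⟨i, j, hij⟩ : ∃ i j, A i j ≠ 0 := by
    by_contra! h
    exact hA (ext h)
  refine Finset.sum_pos' (fun _ _ => Finset.sum_nonneg fun _ _ => sq_nonneg _)
    ⟨i, Finset.mem_univ _, Finset.sum_pos' (fun _ _ => sq_nonneg _)
      ⟨j, Finset.mem_univ _, by positivity⟩⟩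

lemma nuclearNorm_add_frobSq_lt_of_sub_eq_smul [DecidableEq n] {c : ℝ} (hc : 0 < c)
    {S X Z W : Matrix m n ℝ} (hSX : S - X = c • Z)
    (hX : (Zᵀ * X).trace = nuclearNorm X) (hW : (Zᵀ * W).trace ≤ nuclearNorm W)
    (hne : W ≠ X) :
    c * nuclearNorm X + 1 / 2 * frobSq (X - S) < c * nuclearNorm W + 1 / 2 * frobSq (W - S) := by
  have hexpand : frobSq (W - S) =
      frobSq (W - X) + 2 * ((W - X)ᵀ * (X - S)).trace + frobSq (X - S) := by
    rw [← frobSq_add, sub_add_sub_cancel]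
  have hcross : ((W - X)ᵀ * (X - S)).trace = c * ((Zᵀ * X).trace - (Zᵀ * W).trace) := by
    rw [← trace_transpose, transpose_mul, transpose_transpose,
      show X - S = -(c • Z) by rw [← hSX, neg_sub]]
    simp only [transpose_neg, transpose_smul, Matrix.neg_mul, Matrix.smul_mul, Matrix.mul_sub,
      trace_neg, trace_smul, trace_sub, smul_eq_mul]
    ring
  have hpos := frobSq_pos (sub_ne_zero.mpr hne)
  have hW' := mul_le_mul_of_nonneg_left hW hc.le
  rw [hexpand, hcross, hX]
  nlinarith

end Frobenius

section Symmetric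

variable {n : Type*} [Fintype n]

lemma trace_mul_eq_zero_of_symm_of_antisymm {S K : Matrix n n ℝ} (hS : Sᵀ = S)
    (hK : Kᵀ = -K) : (S * K).trace = 0 := by
  have h : (S * K).trace = -(S * K).trace := by
    conv_lhs => rw [← trace_transpose, transpose_mul, hS, hK, neg_mul, trace_neg,
      trace_mul_comm]
  linarith

lemma frobSq_sub_eq_add_of_symm {W : Matrix n n ℝ} (hW : Wᵀ = W) (Q : Matrix n n ℝ) :
    frobSq (W - Q) = frobSq (W - (1 / 2 : ℝ) • (Q + Qᵀ)) +
      frobSq ((1 / 2 : ℝ) • (Q + Qᵀ) - Q) := by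
  set S := (1 / 2 : ℝ) • (Q + Qᵀ)
  have hsym : (W - S)ᵀ = W - S := by
    simp only [S, transpose_sub, transpose_smul, transpose_add, transpose_transpose, hW,
      add_comm]
  have hanti : (S - Q)ᵀ = -(S - Q) := by
    ext i j
    simp only [S, transpose_apply, Matrix.sub_apply, Matrix.neg_apply, Matrix.smul_apply,
      Matrix.add_apply, smul_eq_mul]
    ring
  rw [show W - Q = (W - S) + (S - Q) by abel, frobSq_add, hsym,
    trace_mul_eq_zero_of_symm_of_antisymm hsym hanti]
  ring

end Symmetric

lemma abs_sub_max_sub_le {s t : ℝ} (hs : 0 ≤ s) (ht : 0 ≤ t) : |s - max (s - t) 0| ≤ t := by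
  rcases le_total s t with h | h
  · rw [max_eq_right (by linarith), abs_of_nonneg (by linarith)]; linarith
  · rw [max_eq_left (by linarith), sub_sub_cancel, abs_of_nonneg ht]

lemma sub_max_sub_mul_max (s t : ℝ) :
    (s - max (s - t) 0) * max (s - t) 0 = t * max (s - t) 0 := by
  rcases le_total s t with h | h
  · rw [max_eq_right (by linarith)]; ring
  · rw [max_eq_left (by linarith)]; ring

section Orthogonal

variable {n : Type*} [Fintype n] [DecidableEq n]

lemma transpose_mul_diagonal_mul_transpose (U V : Matrix n n ℝ) (d : n → ℝ) :
    (U * diagonal d * Vᵀ)ᵀ = V * diagonal d * Uᵀ := by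
  simp only [transpose_mul, transpose_transpose, diagonal_transpose, Matrix.mul_assoc]

lemma mul_diagonal_mul_transpose_mul {U : Matrix n n ℝ} (hU : Uᵀ * U = 1)
    (V W : Matrix n n ℝ) (a b : n → ℝ) :
    V * diagonal a * Uᵀ * (U * diagonal b * Wᵀ) = V * diagonal (fun i => a i * b i) * Wᵀ := by
  calc V * diagonal a * Uᵀ * (U * diagonal b * Wᵀ)
      = V * (diagonal a * (Uᵀ * U) * diagonal b) * Wᵀ := by simp only [Matrix.mul_assoc]
    _ = _ := by rw [hU, Matrix.mul_one, diagonal_mul_diagonal]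

lemma trace_conj_diagonal {P : Matrix n n ℝ} (hP : Pᵀ * P = 1) (d : n → ℝ) :
    (P * diagonal d * Pᵀ).trace = ∑ i, d i := by
  rw [trace_mul_cycle, hP, Matrix.one_mul, trace_diagonal]

lemma trace_transpose_mul_of_diagonal {U V : Matrix n n ℝ} (hU : Uᵀ * U = 1)
    (hV : Vᵀ * V = 1) (a b : n → ℝ) :
    ((U * diagonal a * Vᵀ)ᵀ * (U * diagonal b * Vᵀ)).trace = ∑ i, a i * b i := by
  rw [transpose_mul_diagonal_mul_transpose, mul_diagonal_mul_transpose_mul hU,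
    trace_conj_diagonal hV]

open Polynomial in
lemma charpoly_conj_diagonal {P : Matrix n n ℝ} (hP : Pᵀ * P = 1) (d : n → ℝ) :
    (P * diagonal d * Pᵀ).charpoly = ∏ i, (X - C (d i)) := by
  rw [charpoly_mul_comm, ← Matrix.mul_assoc, hP, Matrix.one_mul, charpoly_diagonal]

lemma Matrix.IsHermitian.sum_comp_eigenvalues_eq {A P : Matrix n n ℝ} (hA : A.IsHermitian)
    (hP : Pᵀ * P = 1) {d : n → ℝ} (hAP : A = P * diagonal d * Pᵀ) (g : ℝ → ℝ) :
    ∑ i, g (hA.eigenvalues i) = ∑ i, g (d i) := by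
  have hroots : Multiset.map hA.eigenvalues Finset.univ.val = Multiset.map d Finset.univ.val := by
    have h : A.charpoly.roots = Multiset.map d Finset.univ.val := by
      rw [hAP, charpoly_conj_diagonal hP, Finset.prod_eq_multiset_prod,
        ← Polynomial.roots_multiset_prod_X_sub_C (Finset.univ.val.map d), Multiset.map_map]
      rfl
    rw [hA.roots_charpoly_eq_eigenvalues] at h
    simpa using h
  calc ∑ i, g (hA.eigenvalues i) = ((Finset.univ.val.map hA.eigenvalues).map g).sum := by
        rw [Multiset.map_map]; rfl
    _ = ((Finset.univ.val.map d).map g).sum := by rw [hroots]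
    _ = ∑ i, g (d i) := by rw [Multiset.map_map]; rfl

lemma nuclearNorm_eq_sum_abs {U V : Matrix n n ℝ} (hU : Uᵀ * U = 1) (hV : Vᵀ * V = 1)
    (s : n → ℝ) : nuclearNorm (U * diagonal s * Vᵀ) = ∑ i, |s i| := by
  have h : (U * diagonal s * Vᵀ)ᵀ * (U * diagonal s * Vᵀ) =
      V * diagonal (fun i => s i * s i) * Vᵀ := by
    rw [transpose_mul_diagonal_mul_transpose, mul_diagonal_mul_transpose_mul hU]
  simp only [nuclearNorm, Matrix.IsHermitian.sum_comp_eigenvalues_eq _ hV h,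
    Real.sqrt_mul_self_eq_abs]

lemma exists_orthogonal_diagonalization {W : Matrix n n ℝ} (hW : Wᵀ = W) :
    ∃ (P : Matrix n n ℝ) (d : n → ℝ), Pᵀ * P = 1 ∧ W = P * diagonal d * Pᵀ := by
  have hW' : W.IsHermitian := by simpa [IsHermitian] using hW
  refine ⟨hW'.eigenvectorUnitary, hW'.eigenvalues, ?_, ?_⟩
  · simpa [star_eq_conjTranspose] using
      (mem_unitaryGroup_iff').mp hW'.eigenvectorUnitary.2
  · simpa [RCLike.ofReal_real_eq_id, star_eq_conjTranspose] using hW'.spectral_theorem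

lemma transpose_mul_mul_transpose_eq_one {P V : Matrix n n ℝ} (hP : Pᵀ * P = 1)
    (hV : Vᵀ * V = 1) : Pᵀ * V * (Pᵀ * V)ᵀ = 1 := by
  calc Pᵀ * V * (Pᵀ * V)ᵀ = Pᵀ * (V * Vᵀ) * P := by
        simp only [transpose_mul, transpose_transpose, Matrix.mul_assoc]
    _ = 1 := by rw [mul_eq_one_comm.mp hV, Matrix.mul_one, hP]

lemma abs_mul_diagonal_mul_transpose_apply_self_le_one {A B : Matrix n n ℝ}
    (hA : A * Aᵀ = 1) (hB : B * Bᵀ = 1) {z : n → ℝ} (hz : ∀ i, |z i| ≤ 1) (k : n) :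
    |(A * diagonal z * Bᵀ) k k| ≤ 1 := by
  have hrow {M : Matrix n n ℝ} (hM : M * Mᵀ = 1) : ∑ i, M k i ^ 2 = 1 := by
    simpa [mul_apply, sq] using congrFun₂ hM k k
  have hterm (i : n) : |A k i * z i * B k i| ≤ (A k i ^ 2 + B k i ^ 2) / 2 := by
    rw [abs_mul, abs_mul, ← sq_abs (A k i), ← sq_abs (B k i)]
    nlinarith [hz i, abs_nonneg (A k i), abs_nonneg (B k i), abs_nonneg (z i),
      sq_nonneg (|A k i| - |B k i|), mul_nonneg (abs_nonneg (A k i)) (abs_nonneg (B k i))]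
  calc |(A * diagonal z * Bᵀ) k k| = |∑ i, A k i * z i * B k i| := by
        rw [mul_apply]; simp only [mul_diagonal, transpose_apply]
    _ ≤ ∑ i, (A k i ^ 2 + B k i ^ 2) / 2 :=
        (Finset.abs_sum_le_sum_abs _ _).trans (Finset.sum_le_sum fun i _ => hterm i)
    _ = 1 := by rw [← Finset.sum_div, Finset.sum_add_distrib, hrow hA, hrow hB]; norm_num

lemma trace_transpose_mul_le_sum_abs {U V P R : Matrix n n ℝ} (hU : Uᵀ * U = 1)
    (hV : Vᵀ * V = 1) (hP : Pᵀ * P = 1) (hR : Rᵀ * R = 1) {z : n → ℝ}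
    (hz : ∀ i, |z i| ≤ 1) (s : n → ℝ) :
    ((U * diagonal z * Vᵀ)ᵀ * (P * diagonal s * Rᵀ)).trace ≤ ∑ k, |s k| := by
  set M := Rᵀ * V * diagonal z * (Pᵀ * U)ᵀ
  have hM : ∀ k, |M k k| ≤ 1 := abs_mul_diagonal_mul_transpose_apply_self_le_one
    (transpose_mul_mul_transpose_eq_one hR hV) (transpose_mul_mul_transpose_eq_one hP hU) hz
  have htrace : ((U * diagonal z * Vᵀ)ᵀ * (P * diagonal s * Rᵀ)).trace =
      (M * diagonal s).trace := by
    rw [transpose_mul_diagonal_mul_transpose, ← Matrix.mul_assoc, trace_mul_comm]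
    simp only [M, transpose_mul, transpose_transpose, Matrix.mul_assoc]
  rw [htrace, trace]
  simp only [diag, mul_diagonal]
  refine Finset.sum_le_sum fun k _ => ?_
  calc M k k * s k ≤ |M k k| * |s k| := by rw [← abs_mul]; exact le_abs_self _
    _ ≤ 1 * |s k| := by gcongr; exact hM k
    _ = |s k| := one_mul _

lemma trace_transpose_mul_le_nuclearNorm {U V : Matrix n n ℝ} (hU : Uᵀ * U = 1)
    (hV : Vᵀ * V = 1) {z : n → ℝ} (hz : ∀ i, |z i| ≤ 1) {W : Matrix n n ℝ} (hW : Wᵀ = W) :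
    ((U * diagonal z * Vᵀ)ᵀ * W).trace ≤ nuclearNorm W := by
  obtain ⟨P, d, hP, rfl⟩ := exists_orthogonal_diagonalization hW
  rw [nuclearNorm_eq_sum_abs hP hP]
  exact trace_transpose_mul_le_sum_abs hU hV hP hP hz d

lemma exists_subgradient_of_soft_threshold {U V : Matrix n n ℝ} (hU : Uᵀ * U = 1)
    (hV : Vᵀ * V = 1) {σ : n → ℝ} (hσ : ∀ i, 0 ≤ σ i) {t : ℝ} (ht : 0 < t) :
    ∃ Z : Matrix n n ℝ, (∀ W : Matrix n n ℝ, Wᵀ = W → (Zᵀ * W).trace ≤ nuclearNorm W) ∧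
      U * diagonal σ * Vᵀ - U * diagonal (fun i => max (σ i - t) 0) * Vᵀ = t • Z ∧
      (Zᵀ * (U * diagonal (fun i => max (σ i - t) 0) * Vᵀ)).trace =
        nuclearNorm (U * diagonal (fun i => max (σ i - t) 0) * Vᵀ) := by
  set z : n → ℝ := fun i => (σ i - max (σ i - t) 0) / t
  have hz : ∀ i, |z i| ≤ 1 := fun i => by
    rw [abs_div, abs_of_pos ht, div_le_one ht]
    exact abs_sub_max_sub_le (hσ i) ht.le
  refine ⟨U * diagonal z * Vᵀ, fun W hW => trace_transpose_mul_le_nuclearNorm hU hV hz hW,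
    ?_, ?_⟩
  · rw [← Matrix.sub_mul, ← Matrix.mul_sub, diagonal_sub, ← Matrix.smul_mul, ← Matrix.mul_smul,
      ← diagonal_smul]
    congr 3
    ext i
    simp only [z, Pi.smul_apply, smul_eq_mul, mul_div_cancel₀ _ ht.ne']
  · rw [trace_transpose_mul_of_diagonal hU hV, nuclearNorm_eq_sum_abs hU hV]
    refine Finset.sum_congr rfl fun i _ => ?_
    rw [div_mul_eq_mul_div, sub_max_sub_mul_max, mul_div_cancel_left₀ _ ht.ne',
      abs_of_nonneg (le_max_right _ _)]

lemma mul_diagonal_comp_eq_diagonal_comp_mul_transpose {M : Matrix n n ℝ} {σ : n → ℝ}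
    (hσ : ∀ i, 0 ≤ σ i) (h₁ : M * diagonal σ = diagonal σ * Mᵀ)
    (h₂ : Mᵀ * diagonal σ = diagonal σ * M) {f : ℝ → ℝ} (hf : f 0 = 0) :
    M * diagonal (f ∘ σ) = diagonal (f ∘ σ) * Mᵀ := by
  ext i j
  have e₁ : M i j * σ j = σ i * M j i := by
    simpa [mul_diagonal, diagonal_mul] using congrFun₂ h₁ i j
  have e₂ : M j i * σ j = σ i * M i j := by
    simpa [mul_diagonal, diagonal_mul] using congrFun₂ h₂ i j
  simp only [mul_diagonal, diagonal_mul, transpose_apply, Function.comp_apply]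
  rcases (add_nonneg (hσ i) (hσ j)).eq_or_lt with hzero | hpos
  · obtain ⟨hi, hj⟩ := (add_eq_zero_iff_of_nonneg (hσ i) (hσ j)).mp hzero.symm
    rw [hi, hj, hf]
    ring
  have hsymm : M i j = M j i := by
    have : (σ i + σ j) * (M i j - M j i) = 0 := by linear_combination e₁ - e₂
    linarith [(mul_eq_zero.mp this).resolve_left hpos.ne']
  rcases eq_or_ne (σ i) (σ j) with heq | hne
  · rw [heq, hsymm]; ring
  · have hMij : M i j = 0 := by
      have : (σ i - σ j) * (M i j + M j i) = 0 := by linear_combination -e₁ - e₂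
      linarith [(mul_eq_zero.mp this).resolve_left (sub_ne_zero.mpr hne)]
    rw [← hsymm, hMij]; ring

lemma transpose_mul_diagonal_comp_eq_self {U V : Matrix n n ℝ} (hU : Uᵀ * U = 1)
    (hV : Vᵀ * V = 1) {σ : n → ℝ} (hσ : ∀ i, 0 ≤ σ i)
    (hS : (U * diagonal σ * Vᵀ)ᵀ = U * diagonal σ * Vᵀ) {f : ℝ → ℝ} (hf : f 0 = 0) :
    (U * diagonal (f ∘ σ) * Vᵀ)ᵀ = U * diagonal (f ∘ σ) * Vᵀ := by
  have cancel {A B : Matrix n n ℝ} (h : A * B = 1) (X : Matrix n n ℝ) : A * (B * X) = X := by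
    rw [← Matrix.mul_assoc, h, Matrix.one_mul]
  have hVV := mul_eq_one_comm.mp hV
  set M := Vᵀ * U
  have hS' : V * (diagonal σ * Uᵀ) = U * (diagonal σ * Vᵀ) := by
    rw [transpose_mul_diagonal_mul_transpose] at hS
    simpa only [Matrix.mul_assoc] using hS
  have h₁ : M * diagonal σ = diagonal σ * Mᵀ := by
    calc M * diagonal σ = Vᵀ * (U * (diagonal σ * Vᵀ)) * V := by
          simp only [M, Matrix.mul_assoc, hV, Matrix.mul_one]
      _ = diagonal σ * Mᵀ := by
          simp only [← hS', M, transpose_mul, transpose_transpose, Matrix.mul_assoc, cancel hV]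
  have h₂ : Mᵀ * diagonal σ = diagonal σ * M := by
    calc Mᵀ * diagonal σ = Uᵀ * (V * (diagonal σ * Uᵀ)) * U := by
          simp only [M, transpose_mul, transpose_transpose, Matrix.mul_assoc, hU,
            Matrix.mul_one]
      _ = diagonal σ * M := by simp only [hS', M, Matrix.mul_assoc, cancel hU]
  have hM := mul_diagonal_comp_eq_diagonal_comp_mul_transpose hσ h₁ h₂ hf
  calc (U * diagonal (f ∘ σ) * Vᵀ)ᵀ = V * (diagonal (f ∘ σ) * Mᵀ) * Vᵀ := by
        rw [transpose_mul_diagonal_mul_transpose]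
        simp only [M, transpose_mul, transpose_transpose, Matrix.mul_assoc, hVV, Matrix.mul_one]
    _ = U * diagonal (f ∘ σ) * Vᵀ := by
        simp only [← hM, M, Matrix.mul_assoc, cancel hVV]

end Orthogonal

theorem stmt13 {n : ℕ} (Q : Matrix (Fin n) (Fin n) ℝ) (μ : ℝ) (hμ : 0 < μ)
    (U V : Matrix (Fin n) (Fin n) ℝ) (σ : Fin n → ℝ)
    (hU : Uᵀ * U = 1) (hV : Vᵀ * V = 1) (hσ : ∀ i, 0 ≤ σ i)
    (hSVD : (1 / 2 : ℝ) • (Q + Qᵀ) = U * Matrix.diagonal σ * Vᵀ)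
    (Wstar : Matrix (Fin n) (Fin n) ℝ)
    (hWstar : Wstar = U * Matrix.diagonal (fun i => max (σ i - 1 / μ) 0) * Vᵀ) :
    Wstarᵀ = Wstar ∧
      ∀ W : Matrix (Fin n) (Fin n) ℝ, Wᵀ = W → W ≠ Wstar →
        (1 / μ) * nuclearNorm Wstar + (1 / 2) * frobSq (Wstar - Q) <
          (1 / μ) * nuclearNorm W + (1 / 2) * frobSq (W - Q) := by
  set S := (1 / 2 : ℝ) • (Q + Qᵀ)
  have hS : Sᵀ = S := by simp only [S, transpose_smul, transpose_add, transpose_transpose, add_comm]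
  have hWsym : Wstarᵀ = Wstar := by
    rw [hWstar]
    exact transpose_mul_diagonal_comp_eq_self (f := fun s => max (s - 1 / μ) 0) hU hV hσ
      (hSVD ▸ hS) (by simp; positivity)
  refine ⟨hWsym, fun W hW hne => ?_⟩
  obtain ⟨Z, hZ, hSW, hX⟩ := exists_subgradient_of_soft_threshold hU hV hσ (t := 1 / μ)
    (by positivity)
  rw [← hSVD, ← hWstar] at hSW
  rw [← hWstar] at hX
  have key := nuclearNorm_add_frobSq_lt_of_sub_eq_smul (by positivity) hSW hX (hZ W hW) hne
  rw [frobSq_sub_eq_add_of_symm hW, frobSq_sub_eq_add_of_symm hWsym]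
  linarith
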